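/- arXiv:2602.05119 — 2 statements merged into one kernel-verified Lean document; each statement's English description precedes it below -/
import Mathlib

section
/- If x* minimizes v over [0,1]^d, then every y in the support of P_{x*} minimizes Q over {0,1}^d. -/
/-!
The value of `v` at a vertex of the cube is the corresponding value of `Q`, so `v x* ≤ min Q`.
On the other hand `v x*` is the mean of `Q` under the product-Bernoulli law `P_{x*}`, and a mean
that does not exceed the minimum forces every atom of positive mass to attain it.
-/

open Finset

section WeightedAverage

variable {ι R : Type*} [Fintype ι] [Field R] [LinearOrder R] [IsStrictOrderedRing R]

theorem eq_of_sum_mul_le_of_forall_le {p f : ι → R} {m : R} (hp : ∀ j, 0 ≤ p j)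
    (hsum : ∑ j, p j = 1) (hm : ∀ j, m ≤ f j) (havg : ∑ j, f j * p j ≤ m) {i : ι}
    (hi : 0 < p i) : f i = m := by
  have hdev : ∑ j, (f j - m) * p j = ∑ j, f j * p j - m := by
    simp only [sub_mul, sum_sub_distrib, ← mul_sum, hsum, mul_one]
  have hterm_nonneg : ∀ j ∈ univ, 0 ≤ (f j - m) * p j :=
    fun j _ => mul_nonneg (sub_nonneg.mpr (hm j)) (hp j)
  have hzero : ∑ j, (f j - m) * p j = 0 :=
    le_antisymm (by linarith) (sum_nonneg hterm_nonneg)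
  have hi_zero := (sum_eq_zero_iff_of_nonneg hterm_nonneg).mp hzero i (mem_univ i)
  exact sub_eq_zero.mp ((mul_eq_zero.mp hi_zero).resolve_right hi.ne')

end WeightedAverage

namespace MultilinearExtension

variable {ι : Type*}

def vertex (z : ι → Bool) : ι → ℝ := fun i => if z i then 1 else 0

theorem vertex_mem_Icc (z : ι → Bool) (i : ι) : vertex z i ∈ Set.Icc (0 : ℝ) 1 := by
  by_cases h : z i <;> simp [vertex, h]

variable [Fintype ι]

def bernoulliWeight (x : ι → ℝ) (y : ι → Bool) : ℝ :=
  ∏ i, if y i then x i else 1 - x i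

theorem bernoulliWeight_nonneg {x : ι → ℝ} (hx : ∀ i, x i ∈ Set.Icc (0 : ℝ) 1)
    (y : ι → Bool) : 0 ≤ bernoulliWeight x y :=
  prod_nonneg fun i _ => by
    obtain ⟨h0, h1⟩ := hx i
    split_ifs <;> linarith

theorem bernoulliWeight_vertex (z y : ι → Bool) :
    bernoulliWeight (vertex z) y = if y = z then 1 else 0 := by
  have hcoord : ∀ i, (if y i then vertex z i else 1 - vertex z i) = if y i = z i then 1 else 0 := by
    intro i
    cases y i <;> cases hz : z i <;> simp [vertex, hz]
  rw [bernoulliWeight, prod_congr rfl fun i _ => hcoord i, prod_boole]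
  simp [funext_iff]

variable [DecidableEq ι]

theorem sum_bernoulliWeight (x : ι → ℝ) : ∑ y, bernoulliWeight x y = 1 := by
  have h := prod_univ_sum (fun _ : ι => (univ : Finset Bool))
    (fun i b => if b then x i else 1 - x i)
  rw [Fintype.piFinset_univ] at h
  simpa [bernoulliWeight] using h.symm

def multilinearExt (Q : (ι → Bool) → ℝ) (x : ι → ℝ) : ℝ :=
  ∑ y, Q y * bernoulliWeight x y

theorem multilinearExt_vertex (Q : (ι → Bool) → ℝ) (z : ι → Bool) :
    multilinearExt Q (vertex z) = Q z := by
  simp [multilinearExt, bernoulliWeight_vertex]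

end MultilinearExtension

open MultilinearExtension

/-- if `x*` minimizes the multilinear extension `v` over `[0,1]^d`, then every
`y` in the support of `P_{x*}` (i.e. with positive product-Bernoulli probability) minimizes
`Q` over `{0,1}^d`. -/
theorem support_of_minimizer_minimizes (d : ℕ) (Q : (Fin d → Bool) → ℝ)
    (v : (Fin d → ℝ) → ℝ)
    (hv : ∀ x, v x = ∑ y : Fin d → Bool, Q y * ∏ i, (if y i then x i else 1 - x i))
    (xstar : Fin d → ℝ) (hxstar : ∀ i, xstar i ∈ Set.Icc (0:ℝ) 1)
    (hmin : ∀ x : Fin d → ℝ, (∀ i, x i ∈ Set.Icc (0:ℝ) 1) → v xstar ≤ v x)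
    (y : Fin d → Bool)
    (hy : 0 < ∏ i, (if y i then xstar i else 1 - xstar i)) :
    ∀ y' : Fin d → Bool, Q y ≤ Q y' := by
  obtain rfl : v = multilinearExt Q := funext hv
  have hle : ∀ z, multilinearExt Q xstar ≤ Q z := fun z =>
    multilinearExt_vertex Q z ▸ hmin _ (vertex_mem_Icc z)
  have hQy : Q y = multilinearExt Q xstar :=
    eq_of_sum_mul_le_of_forall_le (bernoulliWeight_nonneg hxstar) (sum_bernoulliWeight xstar)
      hle le_rfl hy
  exact fun y' => hQy ▸ hle y'
end

section
/- Conversely, if ε₁,...,ε_d are real random variables such that for all x ∈ (0,1)^d the vector (1{σ⁻¹(x_i) − ε_i ≥ 0})_{i=1}^d is distributed as P_x (product of Bernoulli(x_i)), where σ is a well-invertible distribution, then ε₁,...,ε_d are i.i.d. with common distribution σ. -/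
open MeasureTheory

/-- The Bernoulli(p) measure on `Bool`. -/
noncomputable def bernoulliMeasure (p : ℝ) : Measure Bool :=
  ENNReal.ofReal p • Measure.dirac true + ENNReal.ofReal (1 - p) • Measure.dirac false

/-!
Threshold `ε` at arbitrary levels `t`. The atom `b` of the resulting Boolean vector contains the
atom `b` of the vector thresholded at the quantiles `σinv (x i)`, as soon as `x i` lies slightly
below `cdf σ (t i)` where `b i` holds and slightly above it where it does not. Letting
`x → cdf σ ∘ t`, every atom has probability at least its weight under
`⊗ᵢ Bernoulli (cdf σ (t i))`, and lower bounds on all atoms of two probability measures on a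
finite set force equality. The all-true atom then gives the joint distribution function
`∏ᵢ cdf σ (t i)`, which identifies the law of `ε` with `σ^⊗d`.
-/

open Set Filter Topology
open ProbabilityTheory (cdf monotone_cdf cdf_nonneg cdf_le_one ofReal_cdf cdf_eq_real
  iIndepFun_iff_map_fun_eq_pi_map)

namespace MeasureTheory.Measure

lemma eq_of_forall_measure_singleton_le {α : Type*} [Fintype α] [MeasurableSpace α]
    [MeasurableSingletonClass α] {μ ν : Measure α} [IsProbabilityMeasure μ]
    [IsProbabilityMeasure ν] (h : ∀ a, ν {a} ≤ μ {a}) : μ = ν := by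
  classical
  refine (Measure.eq_of_le_of_isProbabilityMeasure (Measure.le_iff.2 fun s _ => ?_)).symm
  rw [← s.coe_toFinset, ← sum_measure_singleton, ← sum_measure_singleton]
  exact Finset.sum_le_sum fun a _ => h a

lemma eq_pi_of_forall_Iic {ι : Type*} [Fintype ι] {ν : ι → Measure ℝ}
    [∀ i, IsFiniteMeasure (ν i)] {μ : Measure (ι → ℝ)}
    (h : ∀ t : ι → ℝ, μ (univ.pi fun i => Iic (t i)) = ∏ i, ν i (Iic (t i))) :
    μ = Measure.pi ν := by
  refine (Measure.pi_eq_generateFrom (C := fun _ => range Iic)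
    (fun _ => borel_eq_generateFrom_Iic ℝ |>.symm) (fun _ => isPiSystem_Iic)
    (fun i => ⟨fun n => Iic n, fun n => mem_range_self _, fun _ => measure_lt_top _ _,
      eq_univ_of_forall fun x => mem_iUnion.2 ⟨⌈x⌉₊, Nat.le_ceil x⟩⟩)
    fun s hs => ?_).symm
  choose t ht using hs
  obtain rfl : s = fun i => Iic (t i) := funext fun i => (ht i).symm
  exact h t

lemma map_eq_of_map_fun_eq_pi {Ω ι : Type*} [MeasurableSpace Ω] [Fintype ι] {ℙ : Measure Ω}
    {α : ι → Type*} [∀ i, MeasurableSpace (α i)] {X : ∀ i, Ω → α i} (hX : ∀ i, Measurable (X i))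
    {ν : ∀ i, Measure (α i)} [∀ i, IsProbabilityMeasure (ν i)]
    (h : ℙ.map (fun ω i => X i ω) = Measure.pi ν) (i : ι) :
    ℙ.map (X i) = ν i := by
  classical
  calc ℙ.map (X i) = (ℙ.map fun ω i => X i ω).map (Function.eval i) :=
        (Measure.map_map (measurable_pi_apply i) (measurable_pi_lambda _ hX)).symm
    _ = ν i := by simp [h, Measure.pi_map_eval]

end MeasureTheory.Measure

instance (p : ℝ) : IsFiniteMeasure (bernoulliMeasure p) := ⟨by simp [bernoulliMeasure]⟩

lemma bernoulliMeasure_singleton (p : ℝ) (b : Bool) :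
    bernoulliMeasure p {b} = ENNReal.ofReal (if b then p else 1 - p) := by
  cases b <;> simp [bernoulliMeasure]

lemma isProbabilityMeasure_bernoulliMeasure {p : ℝ} (hp : p ∈ Icc 0 1) :
    IsProbabilityMeasure (bernoulliMeasure p) := by
  constructor
  simp [bernoulliMeasure, ← ENNReal.ofReal_add hp.1 (sub_nonneg.2 hp.2)]

lemma pi_bernoulliMeasure_singleton {ι : Type*} [Fintype ι] {p : ι → ℝ}
    (hp : ∀ i, p i ∈ Icc 0 1) (b : ι → Bool) :
    Measure.pi (fun i => bernoulliMeasure (p i)) {b} =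
      ENNReal.ofReal (∏ i, if b i then p i else 1 - p i) := by
  rw [← univ_pi_singleton, Measure.pi_pi, ENNReal.ofReal_prod_of_nonneg]
  · simp only [bernoulliMeasure_singleton]
  · intro i _
    split <;> linarith [(hp i).1, (hp i).2]

noncomputable def thresholdVector {Ω ι : Type*} (ε : ι → Ω → ℝ) (t : ι → ℝ) (ω : Ω) :
    ι → Bool :=
  fun i => decide (ε i ω ≤ t i)

def HasBernoulliThresholds {Ω ι : Type*} [MeasurableSpace Ω] [Fintype ι] (ℙ : Measure Ω)
    (ε : ι → Ω → ℝ) (σinv : ℝ → ℝ) : Prop :=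
  ∀ x : ι → ℝ, (∀ i, x i ∈ Ioo (0 : ℝ) 1) →
    ℙ.map (thresholdVector ε fun i => σinv (x i)) = Measure.pi fun i => bernoulliMeasure (x i)

section
variable {Ω ι : Type*} [MeasurableSpace Ω] {ε : ι → Ω → ℝ}

lemma measurable_thresholdVector (hε : ∀ i, Measurable (ε i)) (t : ι → ℝ) :
    Measurable (thresholdVector ε t) :=
  measurable_pi_lambda _ fun i =>
    measurable_to_bool <| by
      simp only [thresholdVector, preimage, mem_singleton_iff, decide_eq_true_eq]
      exact measurableSet_le (hε i) measurable_const

omit [MeasurableSpace Ω] in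
lemma thresholdVector_preimage_singleton_mono {s t : ι → ℝ} {b : ι → Bool}
    (hst : ∀ i, if b i then s i ≤ t i else t i ≤ s i) :
    thresholdVector ε s ⁻¹' {b} ⊆ thresholdVector ε t ⁻¹' {b} := by
  intro ω hω
  funext i
  have hi := congrFun hω i
  have hsti := hst i
  cases hb : b i <;>
    simp only [thresholdVector, hb, decide_eq_true_eq, decide_eq_false_iff_not, if_true]
      at hi hsti ⊢
  · exact fun h => hi (h.trans hsti)
  · exact hi.trans hsti

variable [Fintype ι] {ℙ : Measure Ω} {σ : Measure ℝ} {σinv : ℝ → ℝ}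

lemma ofReal_prod_sub_le_map_thresholdVector (hε : ∀ i, Measurable (ε i))
    (hσinv : ∀ x ∈ Ioo (0 : ℝ) 1, cdf σ (σinv x) = x)
    (hlaw : HasBernoulliThresholds ℙ ε σinv) (t : ι → ℝ) (b : ι → Bool) {s : ℝ} (hs : 0 < s)
    (hsb : ∀ i, s < if b i then cdf σ (t i) else 1 - cdf σ (t i)) :
    ENNReal.ofReal (∏ i, ((if b i then cdf σ (t i) else 1 - cdf σ (t i)) - s)) ≤
      ℙ.map (thresholdVector ε t) {b} := by
  set x : ι → ℝ := fun i => if b i then cdf σ (t i) - s else cdf σ (t i) + s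
  have hx : ∀ i, x i ∈ Ioo 0 1 := by
    intro i
    have := hsb i
    have := cdf_nonneg σ (t i)
    have := cdf_le_one σ (t i)
    simp only [x]
    split_ifs at * <;> constructor <;> linarith
  have hσt : ∀ i, if b i then σinv (x i) ≤ t i else t i ≤ σinv (x i) := by
    intro i
    have hxi := hσinv _ (hx i)
    simp only [x] at hxi ⊢
    split_ifs at hxi ⊢ <;> exact ((monotone_cdf σ).reflect_lt (by linarith)).le
  calc ENNReal.ofReal (∏ i, ((if b i then cdf σ (t i) else 1 - cdf σ (t i)) - s))
      = Measure.pi (fun i => bernoulliMeasure (x i)) {b} := by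
        rw [pi_bernoulliMeasure_singleton fun i => Ioo_subset_Icc_self (hx i)]
        congr 1
        refine Finset.prod_congr rfl fun i _ => ?_
        simp only [x]
        split_ifs <;> ring
    _ = ℙ.map (thresholdVector ε fun i => σinv (x i)) {b} := by rw [hlaw x hx]
    _ ≤ ℙ.map (thresholdVector ε t) {b} := by
        rw [Measure.map_apply (measurable_thresholdVector hε _) (measurableSet_singleton b),
          Measure.map_apply (measurable_thresholdVector hε _) (measurableSet_singleton b)]
        exact measure_mono (thresholdVector_preimage_singleton_mono hσt)

lemma pi_bernoulliMeasure_singleton_le_map_thresholdVector (hε : ∀ i, Measurable (ε i))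
    (hσinv : ∀ x ∈ Ioo (0 : ℝ) 1, cdf σ (σinv x) = x)
    (hlaw : HasBernoulliThresholds ℙ ε σinv) (t : ι → ℝ) (b : ι → Bool) :
    Measure.pi (fun i => bernoulliMeasure (cdf σ (t i))) {b} ≤
      ℙ.map (thresholdVector ε t) {b} := by
  set c : ι → ℝ := fun i => if b i then cdf σ (t i) else 1 - cdf σ (t i)
  have hc : ∀ i, 0 ≤ c i := fun i => by
    have := cdf_nonneg σ (t i)
    have := cdf_le_one σ (t i)
    simp only [c]
    split_ifs <;> linarith
  rw [pi_bernoulliMeasure_singleton fun i => ⟨cdf_nonneg σ (t i), cdf_le_one σ (t i)⟩]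
  change ENNReal.ofReal (∏ i, c i) ≤ _
  by_cases hc0 : ∃ i, c i = 0
  · obtain ⟨i, hi⟩ := hc0
    simp [Finset.prod_eq_zero (Finset.mem_univ i) hi]
  have hlim : Tendsto (fun s => ENNReal.ofReal (∏ i, (c i - s))) (𝓝[>] 0)
      (𝓝 (ENNReal.ofReal (∏ i, c i))) := by
    have hcont : Continuous fun s : ℝ => ENNReal.ofReal (∏ i, (c i - s)) :=
      ENNReal.continuous_ofReal.comp (by fun_prop)
    simpa using (hcont.tendsto 0).mono_left nhdsWithin_le_nhds
  refine le_of_tendsto hlim ?_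
  filter_upwards [self_mem_nhdsWithin, nhdsWithin_le_nhds (eventually_all.2 fun i =>
    eventually_lt_nhds ((hc i).lt_of_ne' (not_exists.1 hc0 i)))] with s hs hsc
  exact ofReal_prod_sub_le_map_thresholdVector hε hσinv hlaw t b hs hsc

lemma map_thresholdVector_eq_pi_bernoulliMeasure [IsProbabilityMeasure ℙ]
    (hε : ∀ i, Measurable (ε i)) (hσinv : ∀ x ∈ Ioo (0 : ℝ) 1, cdf σ (σinv x) = x)
    (hlaw : HasBernoulliThresholds ℙ ε σinv) (t : ι → ℝ) :
    ℙ.map (thresholdVector ε t) = Measure.pi fun i => bernoulliMeasure (cdf σ (t i)) := by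
  classical
  have := fun i =>
    isProbabilityMeasure_bernoulliMeasure ⟨cdf_nonneg σ (t i), cdf_le_one σ (t i)⟩
  have := Measure.isProbabilityMeasure_map (μ := ℙ)
    (measurable_thresholdVector hε t).aemeasurable
  exact Measure.eq_of_forall_measure_singleton_le
    (pi_bernoulliMeasure_singleton_le_map_thresholdVector hε hσinv hlaw t)

lemma map_eq_pi_of_hasBernoulliThresholds [IsProbabilityMeasure ℙ] [IsProbabilityMeasure σ]
    (hε : ∀ i, Measurable (ε i)) (hσinv : ∀ x ∈ Ioo (0 : ℝ) 1, cdf σ (σinv x) = x)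
    (hlaw : HasBernoulliThresholds ℙ ε σinv) :
    ℙ.map (fun ω i => ε i ω) = Measure.pi fun _ => σ := by
  refine Measure.eq_pi_of_forall_Iic fun t => ?_
  have hpre : (fun ω i => ε i ω) ⁻¹' univ.pi (fun i => Iic (t i)) =
      thresholdVector ε t ⁻¹' {fun _ => true} := by
    ext ω
    simp [thresholdVector, funext_iff, Pi.le_def]
  rw [Measure.map_apply (measurable_pi_lambda _ hε) (.univ_pi fun _ => measurableSet_Iic), hpre,
    ← Measure.map_apply (measurable_thresholdVector hε t) (measurableSet_singleton _),
    map_thresholdVector_eq_pi_bernoulliMeasure hε hσinv hlaw t, ← univ_pi_singleton,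
    Measure.pi_pi]
  simp [bernoulliMeasure_singleton, ofReal_cdf]

end

theorem threshold_law_implies_iid_general (d : ℕ)
    (σ : Measure ℝ) [IsProbabilityMeasure σ]
    (F σinv : ℝ → ℝ) (hF : ∀ z, F z = (σ (Set.Iic z)).toReal)
    (hinv : ∀ x ∈ Set.Ioo (0:ℝ) 1, F (σinv x) = x)
    {Ω : Type*} [MeasurableSpace Ω] (ℙ : Measure Ω) [IsProbabilityMeasure ℙ]
    (ε : Fin d → Ω → ℝ) (hmeas : ∀ i, Measurable (ε i))
    (hlaw : ∀ x : Fin d → ℝ, (∀ i, x i ∈ Set.Ioo (0:ℝ) 1) →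
      ℙ.map (fun ω i => decide (0 ≤ σinv (x i) - ε i ω)) =
        Measure.pi (fun i => bernoulliMeasure (x i))) :
    (∀ i, ℙ.map (ε i) = σ) ∧
      ProbabilityTheory.iIndepFun ε ℙ := by
  obtain rfl : F = cdf σ := funext fun z => (hF z).trans (cdf_eq_real σ z).symm
  simp_rw [sub_nonneg] at hlaw
  have hmap := map_eq_pi_of_hasBernoulliThresholds hmeas hinv hlaw
  have hmarg := Measure.map_eq_of_map_fun_eq_pi hmeas hmap
  refine ⟨hmarg, (iIndepFun_iff_map_fun_eq_pi_map fun i => (hmeas i).aemeasurable).2 ?_⟩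
  simpa only [hmarg] using hmap

/-- conversely, if for every `x ∈ (0,1)^d` the thresholded vector
`(1{σinv(x i) − ε i ≥ 0})_i` has law `⊗ᵢ Bernoulli(x i)`, where `σ` is well-invertible,
then the `ε i` are i.i.d. with common distribution `σ`. -/
theorem threshold_law_implies_iid (d : ℕ)
    (σ : Measure ℝ) [IsProbabilityMeasure σ]
    (F σinv : ℝ → ℝ) (hF : ∀ z, F z = (σ (Set.Iic z)).toReal)
    (hFcont : Continuous F)
    (supp : Set ℝ) (hsupp : supp = {z : ℝ | ∀ U ∈ nhds z, 0 < σ U})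
    (hmonoF : StrictMonoOn F (interior supp))
    (hinv : ∀ x ∈ Set.Ioo (0:ℝ) 1, F (σinv x) = x)
    (hinv2 : ∀ z ∈ interior supp, σinv (F z) = z)
    {Ω : Type*} [MeasurableSpace Ω] (ℙ : Measure Ω) [IsProbabilityMeasure ℙ]
    (ε : Fin d → Ω → ℝ) (hmeas : ∀ i, Measurable (ε i))
    (hlaw : ∀ x : Fin d → ℝ, (∀ i, x i ∈ Set.Ioo (0:ℝ) 1) →
      ℙ.map (fun ω i => decide (0 ≤ σinv (x i) - ε i ω)) =
        Measure.pi (fun i => bernoulliMeasure (x i))) :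
    (∀ i, ℙ.map (ε i) = σ) ∧
      ProbabilityTheory.iIndepFun ε ℙ :=
  threshold_law_implies_iid_general d σ F σinv hF hinv ℙ ε hmeas hlaw
end
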